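/- arXiv:1410.6960 — 2 statements merged into one kernel-verified Lean document; each statement's English description precedes it below -/
import Mathlib

section
/- Let 𝒮 be an S-closure system in ⟨L^Y, ⊆⟩ and let c_𝒮(A) = ⋂{B ∈ 𝒮 : A ⊆ B}. Then for the set of implications Σ_𝒮 = {A ⇒ c_𝒮(A) : A ∈ L^Y} one has Mod^S(Σ_𝒮) = 𝒮. -/
/-- A complete residuated lattice: a complete lattice with a commutative, associative
multiplication whose neutral element is the top element and which distributes over
arbitrary suprema. -/
class CompleteResiduatedLattice (L : Type*) extends CompleteLattice L, CommMonoid L where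
  mul_sSup : ∀ (a : L) (s : Set L), a * sSup s = ⨆ b ∈ s, a * b
  one_eq_top : (1 : L) = ⊤

namespace FAIparam

variable {L : Type*} {Y : Type*} {X : Type*}

/-- A fuzzy attribute implication (FAI): a pair (antecedent, consequent) of L-sets in Y. -/
abbrev FAI (L Y : Type*) := (Y → L) × (Y → L)

/-- A pair of operators on L-sets in Y. -/
abbrev OpPair (L Y : Type*) := ((Y → L) → (Y → L)) × ((Y → L) → (Y → L))

/-- S is a parameterization: every pair in S is a monotone Galois connection, the identity
pair belongs to S, and S is closed under composition ⟨f₁,g₁⟩∘⟨f₂,g₂⟩ = ⟨f₁∘f₂, g₂∘g₁⟩. -/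
def IsParam [CompleteResiduatedLattice L] (S : Set (OpPair L Y)) : Prop :=
  (∀ p ∈ S, ∀ A B : Y → L, p.1 A ≤ B ↔ A ≤ p.2 B) ∧
  (((id, id) : OpPair L Y) ∈ S) ∧
  (∀ p ∈ S, ∀ q ∈ S, ((p.1 ∘ q.1, q.2 ∘ p.2) : OpPair L Y) ∈ S)

/-- M ⊨^S A ⇒ B : for every ⟨f,g⟩ ∈ S, f(A) ⊆ M implies f(B) ⊆ M. -/
def Sat [CompleteResiduatedLattice L] (S : Set (OpPair L Y)) (M : Y → L) (φ : FAI L Y) : Prop :=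
  ∀ p ∈ S, p.1 φ.1 ≤ M → p.1 φ.2 ≤ M

/-- The set Mod^S(Th) of S-models of a theory Th. -/
def ModS [CompleteResiduatedLattice L] (S : Set (OpPair L Y)) (Th : Set (FAI L Y)) :
    Set (Y → L) :=
  {M | ∀ φ ∈ Th, Sat S M φ}

/-- Semantic entailment Th ⊨^S φ, i.e. Mod^S(Th) ⊆ Mod^S({φ}). -/
def Entails [CompleteResiduatedLattice L] (S : Set (OpPair L Y)) (Th : Set (FAI L Y))
    (φ : FAI L Y) : Prop :=
  ModS S Th ⊆ ModS S {φ}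

/-- [A]^S_Th : the least S-model of Th containing A (intersection of all such models). -/
def clS [CompleteResiduatedLattice L] (S : Set (OpPair L Y)) (Th : Set (FAI L Y))
    (A : Y → L) : Y → L :=
  sInf {M | M ∈ ModS S Th ∧ A ≤ M}

/-- S-closure operator on L^Y. -/
def IsSClosureOp [CompleteResiduatedLattice L] (S : Set (OpPair L Y))
    (c : (Y → L) → (Y → L)) : Prop :=
  (∀ A, A ≤ c A) ∧ (∀ A B, A ≤ B → c A ≤ c B) ∧
  (∀ p ∈ S, ∀ A, c (p.2 (c A)) ≤ p.2 (c A))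

/-- S-closure system in ⟨L^Y, ⊆⟩. -/
def IsSClosureSys [CompleteResiduatedLattice L] (S : Set (OpPair L Y))
    (𝒮 : Set (Y → L)) : Prop :=
  (∀ T ⊆ 𝒮, sInf T ∈ 𝒮) ∧ (∀ p ∈ S, ∀ M ∈ 𝒮, p.2 M ∈ 𝒮)

/-- c_𝒮(A) = ⋂{B ∈ 𝒮 : A ⊆ B}. -/
def clSys [CompleteResiduatedLattice L] (𝒮 : Set (Y → L)) (A : Y → L) : Y → L :=
  sInf {B | B ∈ 𝒮 ∧ A ≤ B}

/-- I ⊨^S A ⇒ B for an L-context ⟨X,Y,I⟩ (with I curried, I x = I_x). -/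
def CtxSat [CompleteResiduatedLattice L] (S : Set (OpPair L Y)) (I : X → Y → L)
    (φ : FAI L Y) : Prop :=
  ∀ x, Sat S (I x) φ

/-- S_g : the set of upper adjoints occurring in S. -/
def Sg [CompleteResiduatedLattice L] (S : Set (OpPair L Y)) : Set ((Y → L) → (Y → L)) :=
  {g | ∃ f, (f, g) ∈ S}

/-- F^↑ = ⋂{g(I_x) : ⟨x,g⟩ ∈ F}. -/
def upOp [CompleteResiduatedLattice L] (I : X → Y → L)
    (F : Set (X × ((Y → L) → (Y → L)))) : Y → L :=
  ⨅ xg ∈ F, xg.2 (I xg.1)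

/-- G^↓ = {⟨x,g⟩ ∈ X × S_g : G ⊆ g(I_x)}. -/
def downOp [CompleteResiduatedLattice L] (S : Set (OpPair L Y)) (I : X → Y → L)
    (G : Y → L) : Set (X × ((Y → L) → (Y → L))) :=
  {xg | xg.2 ∈ Sg S ∧ G ≤ xg.2 (I xg.1)}

/-- G^{↓↑} = ⋂{g(I_x) : x ∈ X, ⟨f,g⟩ ∈ S, G ⊆ g(I_x)}. -/
def dnup [CompleteResiduatedLattice L] (S : Set (OpPair L Y)) (I : X → Y → L)
    (G : Y → L) : Y → L :=
  upOp I (downOp S I G)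

/-- Σ is S-complete in ⟨X,Y,I⟩. -/
def SComplete [CompleteResiduatedLattice L] (S : Set (OpPair L Y)) (Th : Set (FAI L Y))
    (I : X → Y → L) : Prop :=
  ∀ A B : Y → L, Entails S Th (A, B) ↔ CtxSat S I (A, B)

/-- Σ is an S-base of ⟨X,Y,I⟩. -/
def SBase [CompleteResiduatedLattice L] (S : Set (OpPair L Y)) (Th : Set (FAI L Y))
    (I : X → Y → L) : Prop :=
  SComplete S Th I ∧ ∀ Th' ⊂ Th, ¬ SComplete S Th' I

/-- S-provability: axioms A∪B ⇒ A, assumptions from Th, rule (Cut) and rule (F). -/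
inductive ProvS [CompleteResiduatedLattice L] (S : Set (OpPair L Y)) (Th : Set (FAI L Y)) :
    FAI L Y → Prop
  | ax (A B : Y → L) : ProvS S Th (A ⊔ B, A)
  | hyp {φ : FAI L Y} (h : φ ∈ Th) : ProvS S Th φ
  | cut {A B C D : Y → L} : ProvS S Th (A, B) → ProvS S Th (B ⊔ C, D) → ProvS S Th (A ⊔ C, D)
  | mul {A B : Y → L} {p : OpPair L Y} (hp : p ∈ S) : ProvS S Th (A, B) → ProvS S Th (p.1 A, p.1 B)

/-- Provability using the axioms and (Cut) as the only inference rule. -/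
inductive ProvCut [CompleteResiduatedLattice L] (Th : Set (FAI L Y)) : FAI L Y → Prop
  | ax (A B : Y → L) : ProvCut Th (A ⊔ B, A)
  | hyp {φ : FAI L Y} (h : φ ∈ Th) : ProvCut Th φ
  | cut {A B C D : Y → L} : ProvCut Th (A, B) → ProvCut Th (B ⊔ C, D) → ProvCut Th (A ⊔ C, D)

/-- Residuum a → b = ⋁{c : a ⊗ c ≤ b}. -/
def resid [CompleteResiduatedLattice L] (a b : L) : L := sSup {c | a * c ≤ b}

/-- Subsethood degree S(A,B) = ⋀_{y∈Y} (A(y) → B(y)). -/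
def subDeg [CompleteResiduatedLattice L] (A B : Y → L) : L := ⨅ y, resid (A y) (B y)

/-- c ⊗ B, pointwise. -/
def scMul [CompleteResiduatedLattice L] (c : L) (B : Y → L) : Y → L := fun y => c * B y

/-- ||A ⇒ B||^S_M = ⋁{c ∈ L : M ⊨^S A ⇒ c ⊗ B}. -/
def truthDeg [CompleteResiduatedLattice L] (S : Set (OpPair L Y)) (M A B : Y → L) : L :=
  sSup {c | Sat S M (A, scMul c B)}

/-- ||A ⇒ B||^S_Th = ⋀_{M ∈ Mod^S(Th)} ||A ⇒ B||^S_M. -/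
def entDeg [CompleteResiduatedLattice L] (S : Set (OpPair L Y)) (Th : Set (FAI L Y))
    (A B : Y → L) : L :=
  ⨅ M ∈ ModS S Th, truthDeg S M A B

/-- Immediate consequence operator t^S_Th. -/
def tOp [CompleteResiduatedLattice L] (S : Set (OpPair L Y)) (Th : Set (FAI L Y))
    (M : Y → L) : Y → L :=
  M ⊔ sSup {N | ∃ φ ∈ Th, ∃ p ∈ S, p.1 φ.1 ≤ M ∧ N = p.1 φ.2}

/-- S-pseudo-intents, defined by well-founded recursion on ⊊ (L^Y is finite). -/
noncomputable def IsPseudoIntent [CompleteResiduatedLattice L] [Finite L] [Finite Y]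
    (dn : (Y → L) → (Y → L)) : (Y → L) → Prop :=
  (wellFounded_lt (α := Y → L)).fix
    (fun P rec => P < dn P ∧ ∀ Q, ∀ h : Q < P, rec Q h → dn Q ≤ P)

/- Σ_𝒮 is satisfied by every member of 𝒮 because, through the Galois connection,
`f(A) ⊆ M` means `A ⊆ g(M)` and `g(M) ∈ 𝒮` then absorbs `c_𝒮(A)`. Conversely the identity
pair makes a model `M` of `M ⇒ c_𝒮(M)` equal to its closure, hence a member of 𝒮. -/

section ClosureSystem

variable {L Y : Type*} [CompleteResiduatedLattice L] {𝒮 : Set (Y → L)}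

theorem le_clSys (A : Y → L) : A ≤ clSys 𝒮 A :=
  le_sInf fun _ hB => hB.2

theorem clSys_le {A B : Y → L} (hB : B ∈ 𝒮) (hAB : A ≤ B) : clSys 𝒮 A ≤ B :=
  sInf_le ⟨hB, hAB⟩

theorem clSys_mem (h𝒮 : ∀ T ⊆ 𝒮, sInf T ∈ 𝒮) (A : Y → L) : clSys 𝒮 A ∈ 𝒮 :=
  h𝒮 _ fun _ hB => hB.1

theorem clSys_eq_self_of_le {M : Y → L} (h : clSys 𝒮 M ≤ M) : clSys 𝒮 M = M :=
  le_antisymm h (le_clSys M)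

end ClosureSystem

section Models

variable {L Y : Type*} [CompleteResiduatedLattice L] {S : Set (OpPair L Y)} {𝒮 : Set (Y → L)}

/-- Σ_𝒮 = {A ⇒ c_𝒮(A) : A ∈ L^Y}. -/
def clSysImpls (𝒮 : Set (Y → L)) : Set (FAI L Y) :=
  {φ | ∃ A : Y → L, φ = (A, clSys 𝒮 A)}

theorem sat_clSys_of_mem (hgc : ∀ p ∈ S, GaloisConnection p.1 p.2)
    (hg : ∀ p ∈ S, ∀ M ∈ 𝒮, p.2 M ∈ 𝒮) {M : Y → L} (hM : M ∈ 𝒮) (A : Y → L) :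
    Sat S M (A, clSys 𝒮 A) := fun p hp hle =>
  (hgc p hp).l_le <| clSys_le (hg p hp M hM) ((hgc p hp).le_u hle)

theorem subset_modS_clSysImpls (hgc : ∀ p ∈ S, GaloisConnection p.1 p.2)
    (hg : ∀ p ∈ S, ∀ M ∈ 𝒮, p.2 M ∈ 𝒮) : 𝒮 ⊆ ModS S (clSysImpls 𝒮) := by
  rintro M hM _ ⟨A, rfl⟩
  exact sat_clSys_of_mem hgc hg hM A

theorem modS_clSysImpls_subset (hid : ((id, id) : OpPair L Y) ∈ S)
    (h𝒮 : ∀ T ⊆ 𝒮, sInf T ∈ 𝒮) : ModS S (clSysImpls 𝒮) ⊆ 𝒮 := by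
  intro M hM
  have hclM : clSys 𝒮 M ≤ M := hM (M, clSys 𝒮 M) ⟨M, rfl⟩ _ hid le_rfl
  rw [← clSys_eq_self_of_le hclM]
  exact clSys_mem h𝒮 M

end Models

theorem modS_of_clSys_implications_general
    {L Y : Type*} [CompleteResiduatedLattice L]
    (S : Set (OpPair L Y)) (hS : IsParam S)
    (𝒮 : Set (Y → L)) (h𝒮 : IsSClosureSys S 𝒮) :
    ModS S {φ : FAI L Y | ∃ A : Y → L, φ = (A, clSys 𝒮 A)} = 𝒮 := by
  obtain ⟨hgc, hid, -⟩ := hS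
  exact (modS_clSysImpls_subset hid h𝒮.1).antisymm (subset_modS_clSysImpls hgc h𝒮.2)

/-- for an S-closure system 𝒮 and Σ_𝒮 = {A ⇒ c_𝒮(A) : A ∈ L^Y},
one has Mod^S(Σ_𝒮) = 𝒮. -/
theorem modS_of_clSys_implications
    {L Y : Type*} [CompleteResiduatedLattice L] [Nonempty Y]
    (S : Set (OpPair L Y)) (hS : IsParam S)
    (𝒮 : Set (Y → L)) (h𝒮 : IsSClosureSys S 𝒮) :
    ModS S {φ : FAI L Y | ∃ A : Y → L, φ = (A, clSys 𝒮 A)} = 𝒮 :=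
  modS_of_clSys_implications_general S hS 𝒮 h𝒮

end FAIparam
end

section
/- For every set Σ of FAIs in Y and every FAI A ⇒ B, the following are equivalent: (1) Σ ⊨^S A ⇒ B; (2) [M]^S_Σ ⊨^S A ⇒ B for all M ∈ L^Y; (3) [A]^S_Σ ⊨^S A ⇒ B; (4) B ⊆ [A]^S_Σ. -/
namespace FAIparam

variable {L : Type*} {Y : Type*} {X : Type*}

/-!
The least model `[A]` is itself a model containing `A`, which gives (1) ⇒ (2) ⇒ (3), and the
identity pair of `S` turns (3) into (4). For (4) ⇒ (1) the point is that the models of `Σ` are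
closed under every upper adjoint `g` of a pair `⟨f, g⟩ ∈ S` (compose `⟨f, g⟩` with the pairs of `S`
and transport along the Galois connection). So if `M` is a model and `f A ⊆ M`, then `A ⊆ g M`,
hence `[A] ⊆ g M`, hence `B ⊆ g M`, i.e. `f B ⊆ M`.
-/

section LeastModel

variable [CompleteResiduatedLattice L] {S : Set (OpPair L Y)} {Th : Set (FAI L Y)}

theorem sInf_mem_modS {T : Set (Y → L)} (hT : T ⊆ ModS S Th) : sInf T ∈ ModS S Th :=
  fun φ hφ p hp hle => le_sInf fun _ hN => hT hN φ hφ p hp (hle.trans (sInf_le hN))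

theorem clS_mem_modS (M : Y → L) : clS S Th M ∈ ModS S Th :=
  sInf_mem_modS fun _ hN => hN.1

theorem le_clS (M : Y → L) : M ≤ clS S Th M :=
  le_sInf fun _ hN => hN.2

theorem clS_le {M N : Y → L} (hN : N ∈ ModS S Th) (hMN : M ≤ N) : clS S Th M ≤ N :=
  sInf_le ⟨hN, hMN⟩

theorem snd_mem_modS (hS : IsParam S) {p : OpPair L Y} (hp : p ∈ S) {M : Y → L}
    (hM : M ∈ ModS S Th) : p.2 M ∈ ModS S Th := by
  intro φ hφ q hq hle
  rw [← hS.1 p hp] at hle ⊢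
  exact hM φ hφ _ (hS.2.2 p hp q hq) hle

theorem le_of_sat (hid : ((id, id) : OpPair L Y) ∈ S) {M A B : Y → L} (h : Sat S M (A, B))
    (hA : A ≤ M) : B ≤ M :=
  h (id, id) hid hA

theorem sat_of_le_clS (hS : IsParam S) {M A B : Y → L} (hB : B ≤ clS S Th A)
    (hM : M ∈ ModS S Th) : Sat S M (A, B) := by
  intro p hp hle
  rw [hS.1 p hp] at hle ⊢
  exact hB.trans (clS_le (snd_mem_modS hS hp hM) hle)

end LeastModel

theorem entails_tfae_general
    {L Y : Type*} [CompleteResiduatedLattice L]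
    (S : Set (OpPair L Y)) (hS : IsParam S)
    (Th : Set (FAI L Y)) (A B : Y → L) :
    [Entails S Th (A, B),
     ∀ M : Y → L, Sat S (clS S Th M) (A, B),
     Sat S (clS S Th A) (A, B),
     B ≤ clS S Th A].TFAE := by
  tfae_have 1 → 2 := fun h M => h (clS_mem_modS M) (A, B) rfl
  tfae_have 2 → 3 := fun h => h A
  tfae_have 3 → 4 := fun h => le_of_sat hS.2.1 h (le_clS A)
  tfae_have 4 → 1 := by
    rintro hB M hM _ rfl
    exact sat_of_le_clS hS hB hM
  tfae_finish

/-- characterization of semantic entailment under S by least models. -/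
theorem entails_tfae
    {L Y : Type*} [CompleteResiduatedLattice L] [Nonempty Y]
    (S : Set (OpPair L Y)) (hS : IsParam S)
    (Th : Set (FAI L Y)) (A B : Y → L) :
    [Entails S Th (A, B),
     ∀ M : Y → L, Sat S (clS S Th M) (A, B),
     Sat S (clS S Th A) (A, B),
     B ≤ clS S Th A].TFAE :=
  entails_tfae_general S hS Th A B

end FAIparam
end
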